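/- arXiv:1606.07204 — 2 statements merged into one kernel-verified Lean document; each statement's English description precedes it below -/
import Mathlib

section
/- Let n ≥ 2 and let m_1 > m_2 > ⋯ > m_n be positive integers, and let m be any positive integer. Index the multiset A = {m_1, …, m_n, m} by the type Option (Fin n), where index i corresponds to m_{i+1} and the extra index ∗ corresponds to m, and index B = {m_2, …, m_n} by the nonzero elements of Fin n. Then there exists an injective map F from the nonempty subsets S of {2, …, n} (equivalently, nonempty subsets of Fin n avoiding index 1) to subsets T of Option (Fin n) such that for every such S: (i) F(S) is a proper subset of the full index set of A, (ii) F(S) contains both the index of m_1 and the index ∗ of m, and (iii) ∏_{i ∈ S} m_i < ∏_{j ∈ F(S), j ≠ ∗} (value of A at j). -/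
/-!
Send `S = {k < ⋯}` with least element `k ≠ 1` to `T = {1, …, k - 1} ∪ (S \ {k})`, plus the index of
`m`. Since `m₁ > m_k`, the product over `T` exceeds the product over `S`; and `S` can be recovered
from `T`, because `k` is the least index missing from `T` and `S` consists of `k` and the elements
of `T` above it.
-/

namespace Finset

theorem prod_erase_none_insertNone {α M : Type*} [CommMonoid M] [DecidableEq α] (s : Finset α)
    (f : Option α → M) : ∏ j ∈ (insertNone s).erase none, f j = ∏ i ∈ s, f (some i) := by
  simp [insertNone, prod_map]

variable {α : Type*} [LinearOrder α] [LocallyFiniteOrderBot α]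

def replaceMin (S : Finset α) (hS : S.Nonempty) : Finset α :=
  Iio (S.min' hS) ∪ S.erase (S.min' hS)

variable {S : Finset α} (hS : S.Nonempty)

theorem Iio_min'_subset_replaceMin : Iio (S.min' hS) ⊆ S.replaceMin hS :=
  subset_union_left

theorem min'_notMem_replaceMin : S.min' hS ∉ S.replaceMin hS := by
  simp [replaceMin]

theorem insert_min'_filter_replaceMin :
    insert (S.min' hS) ((S.replaceMin hS).filter (S.min' hS < ·)) = S := by
  ext j
  simp only [replaceMin, mem_insert, mem_filter, mem_union, mem_Iio, mem_erase]
  constructor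
  · rintro (rfl | ⟨hj | ⟨-, hj⟩, hlt⟩)
    · exact S.min'_mem hS
    · exact absurd hlt (not_lt.2 hj.le)
    · exact hj
  · intro hj
    rcases (S.min'_le j hj).eq_or_lt with h | h
    · exact Or.inl h.symm
    · exact Or.inr ⟨Or.inr ⟨h.ne', hj⟩, h⟩

theorem eq_of_Iio_subset_of_notMem {T : Finset α} {a b : α} (ha : Iio a ⊆ T) (ha' : a ∉ T)
    (hb : Iio b ⊆ T) (hb' : b ∉ T) : a = b := by
  rcases lt_trichotomy a b with h | h | h
  · exact absurd (hb (mem_Iio.2 h)) ha'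
  · exact h
  · exact absurd (ha (mem_Iio.2 h)) hb'

theorem replaceMin_inj {S' : Finset α} (hS' : S'.Nonempty)
    (h : S.replaceMin hS = S'.replaceMin hS') : S = S' := by
  have hmin : S.min' hS = S'.min' hS' :=
    eq_of_Iio_subset_of_notMem (h ▸ Iio_min'_subset_replaceMin hS) (h ▸ min'_notMem_replaceMin hS)
      (Iio_min'_subset_replaceMin hS') (min'_notMem_replaceMin hS')
  rw [← insert_min'_filter_replaceMin hS, ← insert_min'_filter_replaceMin hS', h, hmin]

theorem prod_lt_prod_replaceMin {m : α → ℕ} (hm : ∀ i, 0 < m i) {a : α} (ha : a < S.min' hS)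
    (hlt : m (S.min' hS) < m a) : ∏ i ∈ S, m i < ∏ i ∈ S.replaceMin hS, m i := by
  set k := S.min' hS
  have hdisj : Disjoint (Iio k) (S.erase k) :=
    disjoint_left.2 fun i hi hi' => not_le.2 (mem_Iio.1 hi) (S.min'_le i (mem_of_mem_erase hi'))
  have hprefix : m a ≤ ∏ i ∈ Iio k, m i := single_le_prod' (fun i _ => hm i) (mem_Iio.2 ha)
  calc ∏ i ∈ S, m i = m k * ∏ i ∈ S.erase k, m i := (mul_prod_erase _ _ (S.min'_mem hS)).symm
    _ < m a * ∏ i ∈ S.erase k, m i :=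
      Nat.mul_lt_mul_of_pos_right hlt (prod_pos fun i _ => hm i)
    _ ≤ (∏ i ∈ Iio k, m i) * ∏ i ∈ S.erase k, m i := Nat.mul_le_mul_right _ hprefix
    _ = ∏ i ∈ S.replaceMin hS, m i := (prod_union hdisj).symm

end Finset

open Finset

/-- Lemma 2.2: given positive integers `m₁ > m₂ > ⋯ > mₙ` (here `m : Fin n → ℕ`,
strictly decreasing) and a positive integer `m'` (the extra element `m`), indexing
the family `A = {m₁, …, mₙ, m}` by `Option (Fin n)` (with `some i ↦ m (i)` and
`none ↦ m'`), there is an injective map `F` from nonempty subsets of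
`{m₂, …, mₙ}` (nonempty subsets of `Fin n` avoiding the index `0` of `m₁`) to
subsets of the index set of `A` such that each `F S` is a proper subset
containing the indices of `m₁` and of `m`, and `∏_{i ∈ S} mᵢ < ∏_{j ∈ F S, j ≠ none} A j`. -/
theorem exists_injective_subset_assignment (n : ℕ) (hn : 2 ≤ n)
    (m : Fin n → ℕ) (hmpos : ∀ i, 0 < m i) (hmanti : StrictAnti m)
    (m' : ℕ) :
    ∃ F : {S : Finset (Fin n) // S.Nonempty ∧ (⟨0, by omega⟩ : Fin n) ∉ S} →
        Finset (Option (Fin n)),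
      Function.Injective F ∧
      ∀ S, F S ⊂ Finset.univ ∧
        (some ⟨0, by omega⟩) ∈ F S ∧ (none : Option (Fin n)) ∈ F S ∧
        ∏ i ∈ S.val, m i <
          ∏ j ∈ (F S).erase none, (Option.elim j m' m) := by
  refine ⟨fun S => insertNone (S.1.replaceMin S.2.1), fun S S' h =>
    Subtype.ext (replaceMin_inj S.2.1 S'.2.1 (insertNone.injective h)), fun S => ?_⟩
  obtain ⟨S, hS, hzero⟩ := S
  have hmin : (⟨0, by omega⟩ : Fin n) < S.min' hS :=
    lt_of_le_of_ne (Nat.zero_le _) fun h => hzero (h ▸ S.min'_mem hS)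
  refine ⟨ssubset_univ_iff.2 fun h =>
      min'_notMem_replaceMin hS (some_mem_insertNone.1 (eq_univ_iff_forall.1 h _)),
    some_mem_insertNone.2 (Iio_min'_subset_replaceMin hS (mem_Iio.2 hmin)), none_mem_insertNone, ?_⟩
  rw [prod_erase_none_insertNone]
  exact prod_lt_prod_replaceMin hS hmpos hmin (hmanti hmin)
end

section
/- Let n = p_1^{m_1} p_2^{m_2} ⋯ p_k^{m_k} with p_1, …, p_k distinct primes, all m_i ≥ 1, k ≥ 2, and p_1^{m_1} > p_2^{m_2} > ⋯ > p_k^{m_k}. Let i ∈ {1, …, k}, let {i_1, …, i_r} with i_1 > i_2 > ⋯ > i_r be a proper subset of {1, …, k} satisfying i ≥ i_1, and let α_1, …, α_r be integers with 1 ≤ α_j ≤ m_{i_j} for each j, such that p_{i_1}^{α_1} ⋯ p_{i_r}^{α_r} ≠ p_i. Let x ∈ Z_n have additive order p_i and let y ∈ Z_n have additive order p_{i_1}^{α_1} p_{i_2}^{α_2} ⋯ p_{i_r}^{α_r}. Then there is no automorphism σ of the power graph P(Z_n) with σ(x) = y. -/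
/-!
Automorphisms permute the classes of closed twins (vertices with equal closed neighbourhoods),
so they preserve their sizes. In `P(ℤ_n)` the closed neighbourhood of `z` is the set of elements
whose order divides or is a multiple of `ord z`, so the twin class of `z` contains the `φ(ord z)`
elements of that order; when `ord z` is a prime `P` and `n` has another prime factor `R`,
elements of orders `R` and `P R` show that it contains nothing else. Hence `σ x = y` forces
`φ(ord y) ≤ p_i - 1`, which yields a prime `p_t ∣ ord y` with `p_t < p_i`, and then `m_t ≥ 2`
since `p_t ^ m_t > p_i ^ m_i`. An element `z` of order `p_t` is adjacent to `y`, so `σ⁻¹ z` is `0`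
or has order divisible by `p_i`; its twin class then has at least `φ(n) > p_t - 1` or
`p_i - 1 > p_t - 1` elements, yet the class of `z` has exactly `p_t - 1`.
-/

/-- The power graph of `ZMod n`: distinct `x`, `y` are adjacent iff one is a
positive multiple (i.e. a positive "power" in additive notation) of the other. -/
def powerGraph (n : ℕ) : SimpleGraph (ZMod n) :=
  SimpleGraph.fromRel (fun x y => ∃ m : ℕ, 0 < m ∧ y = m • x)

section CyclicGroup

variable {G : Type*} [CommGroup G] [IsCyclic G] [Finite G] {a b : G}

@[to_additive]
theorem IsCyclic.mem_zpowers_of_orderOf_dvd (h : orderOf b ∣ orderOf a) :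
    b ∈ Subgroup.zpowers a := by
  have hle : Subgroup.zpowers a ≤ (powMonoidHom (orderOf a) : G →* G).ker := by
    rw [Subgroup.zpowers_le, MonoidHom.mem_ker, powMonoidHom_apply, pow_orderOf_eq_one]
  have heq := Subgroup.eq_of_le_of_card_ge hle <| by
    rw [IsCyclic.card_powMonoidHom_ker, Nat.card_zpowers,
      Nat.gcd_eq_right (orderOf_dvd_natCard a)]
  rw [heq, MonoidHom.mem_ker, powMonoidHom_apply, ← orderOf_dvd_iff_pow_eq_one]
  exact h

@[to_additive]
theorem IsCyclic.exists_pos_pow_eq_iff_orderOf_dvd :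
    (∃ m : ℕ, 0 < m ∧ b = a ^ m) ↔ orderOf b ∣ orderOf a := by
  constructor
  · rintro ⟨m, -, rfl⟩
    exact orderOf_pow_dvd m
  · intro h
    obtain ⟨m, rfl⟩ := mem_powers_iff_mem_zpowers.mpr (mem_zpowers_of_orderOf_dvd h)
    refine ⟨m + orderOf a, by have := orderOf_pos a; omega, ?_⟩
    rw [pow_add, pow_orderOf_eq_one, mul_one]

end CyclicGroup

namespace SimpleGraph

variable {V W : Type*} (G : SimpleGraph V) {G' : SimpleGraph W}

def closedNeighborSet (v : V) : Set V := insert v (G.neighborSet v)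

def twinClass (v : V) : Set V := {w | G.closedNeighborSet w = G.closedNeighborSet v}

variable {G}

theorem Iso.image_closedNeighborSet (σ : G ≃g G') (v : V) :
    σ '' G.closedNeighborSet v = G'.closedNeighborSet (σ v) := by
  rw [closedNeighborSet, Set.image_insert_eq, σ.image_neighborSet, closedNeighborSet]

theorem Iso.image_twinClass (σ : G ≃g G') (v : V) :
    σ '' G.twinClass v = G'.twinClass (σ v) := by
  ext w
  obtain ⟨u, rfl⟩ := σ.surjective w
  simp only [σ.injective.mem_set_image, twinClass, Set.mem_ofPred_eq,
    ← σ.image_closedNeighborSet, (Set.image_injective.mpr σ.injective).eq_iff]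

theorem Iso.ncard_twinClass (σ : G ≃g G') (v : V) :
    (G'.twinClass (σ v)).ncard = (G.twinClass v).ncard := by
  rw [← σ.image_twinClass, Set.ncard_image_of_injective _ σ.injective]

end SimpleGraph

theorem Nat.totient_le_totient_of_dvd {a b : ℕ} (hb : b ≠ 0) (h : a ∣ b) :
    a.totient ≤ b.totient :=
  Nat.le_of_dvd (Nat.totient_pos.mpr (Nat.pos_of_ne_zero hb)) (Nat.totient_dvd_of_dvd h)

theorem Nat.Prime.sub_one_lt_totient_of_sq_dvd {P n : ℕ} (hP : P.Prime) (hn : n ≠ 0)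
    (h : P ^ 2 ∣ n) : P - 1 < n.totient :=
  calc P - 1 < P * (P - 1) := lt_mul_of_one_lt_left (by have := hP.two_le; omega) hP.one_lt
    _ = (P ^ 2).totient := by rw [Nat.totient_prime_pow hP two_pos]; simp
    _ ≤ n.totient := Nat.totient_le_totient_of_dvd hn h

theorem exists_mem_prime_lt_of_totient_prod_le {ι : Type*} {p α : ι → ℕ} {s : Finset ι} {i : ι}
    (hp : ∀ j, (p j).Prime) (hpinj : Function.Injective p) (hsne : s.Nonempty)
    (hα : ∀ j ∈ s, 1 ≤ α j) (hne : ∏ j ∈ s, p j ^ α j ≠ p i)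
    (h : (∏ j ∈ s, p j ^ α j).totient ≤ p i - 1) : ∃ t ∈ s, p t < p i := by
  obtain ⟨t, hts, hti⟩ : ∃ t ∈ s, t ≠ i := by
    by_contra! hs
    obtain ⟨j, hj⟩ := hsne
    have hsi : s = {i} := Finset.eq_singleton_iff_unique_mem.mpr ⟨hs j hj ▸ hj, hs⟩
    have hαi_pos := hα i (hsi ▸ Finset.mem_singleton_self i)
    rw [hsi, Finset.prod_singleton] at hne h
    have hαi : α i = 1 := by
      by_contra hαi
      have := (hp i).sub_one_lt_totient_of_sq_dvd (pow_ne_zero _ (hp i).ne_zero)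
        (pow_dvd_pow _ (by omega : 2 ≤ α i))
      omega
    exact hne (by rw [hαi, pow_one])
  have hpt : p t - 1 ≤ p i - 1 :=
    calc p t - 1 = (p t).totient := (Nat.totient_prime (hp t)).symm
      _ ≤ (∏ j ∈ s, p j ^ α j).totient :=
        Nat.totient_le_totient_of_dvd
          (Finset.prod_ne_zero_iff.mpr fun j _ => pow_ne_zero _ (hp j).ne_zero)
          ((dvd_pow_self _ (Nat.one_le_iff_ne_zero.mp (hα t hts))).trans
            (Finset.dvd_prod_of_mem _ hts))
      _ ≤ p i - 1 := h
  have := (hp t).two_le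
  have := hpinj.ne hti
  exact ⟨t, hts, by omega⟩

namespace ZMod

theorem addOrderOf_dvd {n : ℕ} (z : ZMod n) : addOrderOf z ∣ n := by
  simpa only [Nat.card_zmod] using addOrderOf_dvd_natCard z

variable {n : ℕ} [NeZero n]

theorem exists_addOrderOf_eq {d : ℕ} (hd : d ∣ n) : ∃ z : ZMod n, addOrderOf z = d :=
  ⟨(n / d : ℕ), by rw [addOrderOf_coe _ (NeZero.ne n),
    Nat.gcd_eq_right (Nat.div_dvd_of_dvd hd), Nat.div_div_self hd (NeZero.ne n)]⟩

theorem ncard_setOf_addOrderOf_eq {d : ℕ} (hd : d ∣ n) :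
    {z : ZMod n | addOrderOf z = d}.ncard = d.totient := by
  classical
  rw [← IsAddCyclic.card_addOrderOf_eq_totient (α := ZMod n) (by rwa [ZMod.card]),
    ← Set.ncard_coe_finset, Finset.coe_filter_univ]

end ZMod

section PowerGraph

open SimpleGraph

variable {n : ℕ} [NeZero n]

theorem powerGraph_adj_iff {a b : ZMod n} :
    (powerGraph n).Adj a b ↔
      a ≠ b ∧ (addOrderOf b ∣ addOrderOf a ∨ addOrderOf a ∣ addOrderOf b) := by
  simp only [powerGraph, fromRel_adj, IsAddCyclic.exists_pos_nsmul_eq_iff_addOrderOf_dvd]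

theorem mem_closedNeighborSet_powerGraph {z w : ZMod n} :
    w ∈ (powerGraph n).closedNeighborSet z ↔
      addOrderOf w ∣ addOrderOf z ∨ addOrderOf z ∣ addOrderOf w := by
  rw [closedNeighborSet, Set.mem_insert_iff, mem_neighborSet, powerGraph_adj_iff]
  by_cases h : w = z
  · simp [h]
  · simp [h, Ne.symm h]

theorem mem_twinClass_powerGraph {z w : ZMod n} :
    w ∈ (powerGraph n).twinClass z ↔ ∀ v : ZMod n,
      (addOrderOf v ∣ addOrderOf w ∨ addOrderOf w ∣ addOrderOf v) ↔
        (addOrderOf v ∣ addOrderOf z ∨ addOrderOf z ∣ addOrderOf v) := by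
  simp only [twinClass, Set.mem_ofPred_eq, Set.ext_iff, mem_closedNeighborSet_powerGraph]

theorem setOf_addOrderOf_eq_subset_twinClass (z : ZMod n) :
    {w : ZMod n | addOrderOf w = addOrderOf z} ⊆ (powerGraph n).twinClass z := by
  intro w hw
  rw [Set.mem_ofPred_eq] at hw
  rw [mem_twinClass_powerGraph, hw]
  exact fun _ => Iff.rfl

theorem totient_addOrderOf_le_ncard_twinClass (z : ZMod n) :
    (addOrderOf z).totient ≤ ((powerGraph n).twinClass z).ncard := by
  rw [← ZMod.ncard_setOf_addOrderOf_eq (ZMod.addOrderOf_dvd z)]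
  exact Set.ncard_le_ncard (setOf_addOrderOf_eq_subset_twinClass z)

theorem totient_le_ncard_twinClass_zero :
    n.totient ≤ ((powerGraph n).twinClass 0).ncard := by
  rw [← ZMod.ncard_setOf_addOrderOf_eq dvd_rfl]
  refine Set.ncard_le_ncard fun g hg => mem_twinClass_powerGraph.mpr fun v => ?_
  rw [Set.mem_ofPred_eq] at hg
  simp [hg, ZMod.addOrderOf_dvd v]

theorem twinClass_powerGraph_of_prime {z : ZMod n} {P R : ℕ} (hz : addOrderOf z = P)
    (hP : P.Prime) (hR : R.Prime) (hRn : R ∣ n) (hRP : R ≠ P) :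
    (powerGraph n).twinClass z = {w | addOrderOf w = P} := by
  refine subset_antisymm (fun w hw => ?_) (hz ▸ setOf_addOrderOf_eq_subset_twinClass z)
  rw [mem_twinClass_powerGraph, hz] at hw
  rw [Set.mem_ofPred_eq]
  obtain ⟨u, hu⟩ := ZMod.exists_addOrderOf_eq hRn
  have hRw : ¬ (R ∣ addOrderOf w ∨ addOrderOf w ∣ R) := by
    rw [← hu, hw u, hu, Nat.prime_dvd_prime_iff_eq hR hP, Nat.prime_dvd_prime_iff_eq hP hR]
    exact fun h => h.elim hRP (fun h => hRP h.symm)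
  rcases (hw w).mp (.inl dvd_rfl) with hwP | ⟨g, hg⟩
  · rcases (Nat.dvd_prime hP).mp hwP with h1 | h
    · exact absurd (.inr (h1 ▸ one_dvd R)) hRw
    · exact h
  · have hPRn : P * R ∣ n := Nat.Coprime.mul_dvd_of_dvd_of_dvd
      ((Nat.coprime_primes hP hR).mpr hRP.symm) (hz ▸ ZMod.addOrderOf_dvd z) hRn
    obtain ⟨v, hv⟩ := ZMod.exists_addOrderOf_eq hPRn
    have hvw := (hw v).mpr (.inr (hv ▸ dvd_mul_right P R))
    rw [hv, hg, Nat.mul_dvd_mul_iff_left hP.pos, Nat.mul_dvd_mul_iff_left hP.pos] at hvw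
    have hgR : ¬ R ∣ g := fun h => hRw (.inl (hg ▸ Dvd.dvd.mul_left h P))
    rcases hvw with hRg | hgR'
    · exact absurd hRg hgR
    · rcases (Nat.dvd_prime hR).mp hgR' with rfl | rfl
      · rw [hg, mul_one]
      · exact absurd dvd_rfl hgR

theorem ncard_twinClass_powerGraph_of_prime {z : ZMod n} {P R : ℕ} (hz : addOrderOf z = P)
    (hP : P.Prime) (hR : R.Prime) (hRn : R ∣ n) (hRP : R ≠ P) :
    ((powerGraph n).twinClass z).ncard = P - 1 := by
  rw [twinClass_powerGraph_of_prime hz hP hR hRn hRP,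
    ZMod.ncard_setOf_addOrderOf_eq (hz ▸ ZMod.addOrderOf_dvd z), Nat.totient_prime hP]

theorem totient_addOrderOf_map_le (σ : powerGraph n ≃g powerGraph n) {x : ZMod n} {P R : ℕ}
    (hx : addOrderOf x = P) (hP : P.Prime) (hR : R.Prime) (hRn : R ∣ n) (hRP : R ≠ P) :
    (addOrderOf (σ x)).totient ≤ P - 1 :=
  calc (addOrderOf (σ x)).totient ≤ ((powerGraph n).twinClass (σ x)).ncard :=
        totient_addOrderOf_le_ncard_twinClass _
    _ = P - 1 := by rw [σ.ncard_twinClass, ncard_twinClass_powerGraph_of_prime hx hP hR hRn hRP]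

theorem map_ne_of_prime_lt_dvd (σ : powerGraph n ≃g powerGraph n) {x y : ZMod n} {P Q : ℕ}
    (hx : addOrderOf x = P) (hP : P.Prime) (hQ : Q.Prime) (hQy : Q ∣ addOrderOf y)
    (hQP : Q < P) (hQn : Q ^ 2 ∣ n) : σ x ≠ y := by
  rintro rfl
  obtain ⟨z, hz⟩ := ZMod.exists_addOrderOf_eq (hQy.trans (ZMod.addOrderOf_dvd _))
  set w := σ.symm z
  have hw : ((powerGraph n).twinClass w).ncard = Q - 1 := by
    rw [← σ.ncard_twinClass, σ.apply_symm_apply,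
      ncard_twinClass_powerGraph_of_prime hz hQ hP (hx ▸ ZMod.addOrderOf_dvd x) hQP.ne']
  have hwx : w ∈ (powerGraph n).closedNeighborSet x := by
    rw [← σ.injective.mem_set_image, σ.image_closedNeighborSet, σ.apply_symm_apply,
      mem_closedNeighborSet_powerGraph, hz]
    exact .inl hQy
  rw [mem_closedNeighborSet_powerGraph, hx] at hwx
  obtain hw0 | hPw : w = 0 ∨ P ∣ addOrderOf w := by
    rcases hwx with hwP | hPw
    · rw [← AddMonoid.addOrderOf_eq_one_iff]
      exact ((Nat.dvd_prime hP).mp hwP).imp_right fun h : addOrderOf w = P => h ▸ dvd_rfl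
    · exact .inr hPw
  · have := totient_le_ncard_twinClass_zero (n := n)
    rw [← hw0, hw] at this
    exact (hQ.sub_one_lt_totient_of_sq_dvd (NeZero.ne n) hQn).not_ge this
  · have : P - 1 ≤ Q - 1 :=
      calc P - 1 = P.totient := (Nat.totient_prime hP).symm
        _ ≤ (addOrderOf w).totient := Nat.totient_le_totient_of_dvd (addOrderOf_pos w).ne' hPw
        _ ≤ Q - 1 := hw ▸ totient_addOrderOf_le_ncard_twinClass w
    have := hQ.two_le
    omega

end PowerGraph

theorem no_aut_prime_to_proper_product_general (k : ℕ) (hk : 2 ≤ k) (p : Fin k → ℕ)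
    (hp : ∀ i, (p i).Prime) (hpinj : Function.Injective p)
    (m : Fin k → ℕ) (hm : ∀ i, 1 ≤ m i)
    (hanti : StrictAnti (fun i => p i ^ m i))
    (n : ℕ) (hn : n = ∏ i, p i ^ m i)
    (i : Fin k) (s : Finset (Fin k)) (hsne : s.Nonempty)
    (hsle : ∀ j ∈ s, j ≤ i)
    (α : Fin k → ℕ) (hα : ∀ j ∈ s, 1 ≤ α j ∧ α j ≤ m j)
    (hne : ∏ j ∈ s, p j ^ α j ≠ p i)
    (x y : ZMod n) (hx : addOrderOf x = p i)
    (hy : addOrderOf y = ∏ j ∈ s, p j ^ α j) :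
    ∀ σ : powerGraph n ≃g powerGraph n, σ x ≠ y := by
  have : NeZero n := ⟨hn ▸ Finset.prod_ne_zero_iff.mpr fun j _ => pow_ne_zero _ (hp j).ne_zero⟩
  have hpow_dvd (j : Fin k) : p j ^ m j ∣ n := hn ▸ Finset.dvd_prod_of_mem _ (Finset.mem_univ j)
  intro σ hσ
  obtain ⟨t₁, ht₁⟩ := Fintype.exists_ne_of_one_lt_card (by rw [Fintype.card_fin]; omega) i
  have hq := hy ▸ hσ ▸ totient_addOrderOf_map_le σ hx (hp i) (hp t₁)
    ((dvd_pow_self _ (Nat.one_le_iff_ne_zero.mp (hm t₁))).trans (hpow_dvd t₁)) (hpinj.ne ht₁)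
  obtain ⟨t, hts, hpt⟩ :=
    exists_mem_prime_lt_of_totient_prod_le hp hpinj hsne (fun j hj => (hα j hj).1) hne hq
  have hmt : 2 ≤ m t := by
    by_contra! hmt
    have hlt : p i ^ m i < p t ^ m t :=
      hanti (lt_of_le_of_ne (hsle t hts) (ne_of_apply_ne p hpt.ne))
    rw [show m t = 1 by have := hm t; omega, pow_one] at hlt
    exact (Nat.le_self_pow (Nat.one_le_iff_ne_zero.mp (hm i)) (p i)).not_gt (hlt.trans hpt)
  have hpt_dvd : p t ∣ addOrderOf y := hy ▸
    (dvd_pow_self _ (Nat.one_le_iff_ne_zero.mp (hα t hts).1)).trans (Finset.dvd_prod_of_mem _ hts)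
  exact map_ne_of_prime_lt_dvd σ hx (hp i) (hp t) hpt_dvd hpt
    ((pow_dvd_pow _ hmt).trans (hpow_dvd t)) hσ

/-- Lemma 2.4(i): for `n = p₁^{m₁}⋯p_k^{m_k}` with `k ≥ 2` distinct primes and
`p₁^{m₁} > ⋯ > p_k^{m_k}` (indices zero-based), no automorphism of the power graph
of `ZMod n` sends an element of order `p i` to an element of order
`∏_{j ∈ s} p j ^ α j` where `s` is a proper subset of the index set all of whose
elements are `≤ i`, `1 ≤ α j ≤ m j` on `s`, and this product is not `p i`. -/
theorem no_aut_prime_to_proper_product (k : ℕ) (hk : 2 ≤ k) (p : Fin k → ℕ)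
    (hp : ∀ i, (p i).Prime) (hpinj : Function.Injective p)
    (m : Fin k → ℕ) (hm : ∀ i, 1 ≤ m i)
    (hanti : StrictAnti (fun i => p i ^ m i))
    (n : ℕ) (hn : n = ∏ i, p i ^ m i)
    (i : Fin k) (s : Finset (Fin k)) (hs : s ⊂ Finset.univ) (hsne : s.Nonempty)
    (hsle : ∀ j ∈ s, j ≤ i)
    (α : Fin k → ℕ) (hα : ∀ j ∈ s, 1 ≤ α j ∧ α j ≤ m j)
    (hne : ∏ j ∈ s, p j ^ α j ≠ p i)
    (x y : ZMod n) (hx : addOrderOf x = p i)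
    (hy : addOrderOf y = ∏ j ∈ s, p j ^ α j) :
    ∀ σ : powerGraph n ≃g powerGraph n, σ x ≠ y :=
  no_aut_prime_to_proper_product_general k hk p hp hpinj m hm hanti n hn i s hsne hsle α hα hne x y
    hx hy
end
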